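/- For any distinct i, j ∈ {1,…,8}, the composition K_{i,j} ∘ s₂ of ℤ-linear endomorphisms of L_Y equals the Kac translation T_{H₁−Eᵢ−Eⱼ}, and the composition K_{i,j} ∘ s₁ equals the Kac translation T_{H₂−Eᵢ−Eⱼ}. -/

import Mathlib

open Finset

/-- `L_Y`: the free ℤ-module with basis `H₁, H₂, E₁, …, E₈`; index `0` is `H₁`,
index `1` is `H₂`, and index `i+1` is `Eᵢ` for `i = 1,…,8`. -/
abbrev LY : Type := Fin 10 → ℤ

noncomputable def basisY : Module.Basis (Fin 10) ℤ LY := Pi.basisFun ℤ (Fin 10)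

/-- The basis vectors of `L_Y`: `bY 0 = H₁`, `bY 1 = H₂`, `bY (i+1) = Eᵢ` for `i = 1,…,8`. -/
noncomputable def bY (a : Fin 10) : LY := basisY a

/-- The symmetric bilinear form on `L_Y` with `⟨H₁,H₂⟩ = 1`, `⟨H₁,H₁⟩ = ⟨H₂,H₂⟩ = 0`,
`⟨Eᵢ,Eᵢ⟩ = -1`, and all other products of distinct basis vectors `0`. -/
noncomputable def formY : LY →ₗ[ℤ] LY →ₗ[ℤ] ℤ :=
  Matrix.toLinearMap₂' ℤ (Matrix.of (fun a b : Fin 10 =>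
    if (a = 0 ∧ b = 1) ∨ (a = 1 ∧ b = 0) then (1 : ℤ)
    else if a = b ∧ a ≠ 0 ∧ a ≠ 1 then -1 else 0))

/-- The anticanonical class `δ = 2H₁ + 2H₂ - E₁ - ⋯ - E₈`. -/
noncomputable def deltaY : LY :=
  (2 : ℤ) • bY 0 + (2 : ℤ) • bY 1 - ∑ k ∈ ({0, 1} : Finset (Fin 10))ᶜ, bY k

/-- The Kac translation `T_α(λ) = λ + ⟨δ,λ⟩α + (⟨δ,λ⟩ - ⟨α,λ⟩)δ` on `L_Y`. -/
noncomputable def kacY (α : LY) : LY →ₗ[ℤ] LY :=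
  LinearMap.id + (formY deltaY).smulRight α + (formY deltaY - formY α).smulRight deltaY

/-- The vertical switch action `s₁` on `L_Y`: `s₁(H₁) = H₁`,
`s₁(H₂) = 4H₁ + H₂ - Σₖ Eₖ`, `s₁(Eⱼ) = H₁ - Eⱼ`. -/
noncomputable def sw1 : LY →ₗ[ℤ] LY :=
  basisY.constr ℤ (fun a =>
    if a = 0 then bY 0
    else if a = 1 then
      (4 : ℤ) • bY 0 + bY 1 - ∑ k ∈ ({0, 1} : Finset (Fin 10))ᶜ, bY k
    else bY 0 - bY a)

/-- The horizontal switch action `s₂` on `L_Y`: `s₂(H₁) = H₁ + 4H₂ - Σₖ Eₖ`,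
`s₂(H₂) = H₂`, `s₂(Eⱼ) = H₂ - Eⱼ`. -/
noncomputable def sw2 : LY →ₗ[ℤ] LY :=
  basisY.constr ℤ (fun a =>
    if a = 0 then
      bY 0 + (4 : ℤ) • bY 1 - ∑ k ∈ ({0, 1} : Finset (Fin 10))ᶜ, bY k
    else if a = 1 then bY 1
    else bY 1 - bY a)

/-- The involution action `K_{i,j}` on `L_Y` (for distinct `i, j ∈ {1,…,8}`, here encoded
by distinct indices `i, j ∉ {0, 1}` of `Fin 10`):
`K(H₁) = 3H₁ + 4H₂ - 3(Eᵢ+Eⱼ) - Σ'Eₖ`, `K(H₂) = 4H₁ + 3H₂ - 3(Eᵢ+Eⱼ) - Σ'Eₖ`,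
`K(Eᵢ) = 3H₁ + 3H₂ - 3Eᵢ - 2Eⱼ - Σ'Eₖ`, `K(Eⱼ) = 3H₁ + 3H₂ - 2Eᵢ - 3Eⱼ - Σ'Eₖ`,
`K(Eₖ) = H₁ + H₂ - Eᵢ - Eⱼ - Eₖ` for `k ∉ {i,j}`, where `Σ'` sums over
`k ∈ {1,…,8} \ {i,j}`. -/
noncomputable def KY (i j : Fin 10) : LY →ₗ[ℤ] LY :=
  basisY.constr ℤ (fun a =>
    if a = 0 then
      (3 : ℤ) • bY 0 + (4 : ℤ) • bY 1 - (3 : ℤ) • (bY i + bY j)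
        - ∑ k ∈ ({0, 1, i, j} : Finset (Fin 10))ᶜ, bY k
    else if a = 1 then
      (4 : ℤ) • bY 0 + (3 : ℤ) • bY 1 - (3 : ℤ) • (bY i + bY j)
        - ∑ k ∈ ({0, 1, i, j} : Finset (Fin 10))ᶜ, bY k
    else if a = i then
      (3 : ℤ) • bY 0 + (3 : ℤ) • bY 1 - (3 : ℤ) • bY i - (2 : ℤ) • bY j
        - ∑ k ∈ ({0, 1, i, j} : Finset (Fin 10))ᶜ, bY k
    else if a = j then
      (3 : ℤ) • bY 0 + (3 : ℤ) • bY 1 - (2 : ℤ) • bY i - (3 : ℤ) • bY j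
        - ∑ k ∈ ({0, 1, i, j} : Finset (Fin 10))ᶜ, bY k
    else bY 0 + bY 1 - bY i - bY j - bY a)


lemma formY_bY (b a : Fin 10) : formY (bY b) (bY a) =
    if (b = 0 ∧ a = 1) ∨ (b = 1 ∧ a = 0) then 1
    else if b = a ∧ b ≠ 0 ∧ b ≠ 1 then -1 else 0 := by
  rw [formY, Matrix.toLinearMap₂'_apply]
  rw [Fintype.sum_eq_single b (fun x hx => ?_)]
  · rw [Fintype.sum_eq_single a (fun y hy => ?_)]
    · simp [bY, basisY]
    · simp [bY, basisY, Pi.single_apply, hy]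
  · simp [bY, basisY, Pi.single_apply, hx]

lemma formY_sum (a : Fin 10) (s : Finset (Fin 10)) (h0 : (0 : Fin 10) ∉ s)
    (h1 : (1 : Fin 10) ∉ s) :
    formY (∑ k ∈ s, bY k) (bY a) = if a ∈ s then -1 else 0 := by
  rw [map_sum, LinearMap.sum_apply]
  have h : ∀ k ∈ s, formY (bY k) (bY a) = if k = a then (-1 : ℤ) else 0 := by
    intro k hk
    have hk0 : k ≠ 0 := fun h => h0 (h ▸ hk)
    have hk1 : k ≠ 1 := fun h => h1 (h ▸ hk)
    rw [formY_bY]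
    simp only [hk0, hk1, false_and, and_false, or_self, if_false, ne_eq,
      not_false_eq_true, and_true]
  rw [Finset.sum_congr rfl h, Finset.sum_ite_eq' s a fun _ => (-1 : ℤ)]

lemma compl_split {i j : Fin 10} (hi0 : i ≠ 0) (hi1 : i ≠ 1) (hj0 : j ≠ 0) (hj1 : j ≠ 1) :
    (({0, 1} : Finset (Fin 10)))ᶜ
    = insert i (insert j (({0, 1, i, j} : Finset (Fin 10)))ᶜ) := by
  ext k
  simp only [Finset.mem_compl, Finset.mem_insert, Finset.mem_singleton]
  constructor
  · rintro h
    by_cases hki : k = i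
    · exact Or.inl hki
    by_cases hkj : k = j
    · exact Or.inr (Or.inl hkj)
    · exact Or.inr (Or.inr (by push_neg at h ⊢; tauto))
  · rintro (rfl | rfl | h)
    · push_neg; exact ⟨hi0, hi1⟩
    · push_neg; exact ⟨hj0, hj1⟩
    · push_neg at h ⊢; tauto

lemma i_not_mem {i j : Fin 10} (hij : i ≠ j) :
    i ∉ insert j (({0, 1, i, j} : Finset (Fin 10)))ᶜ := by
  simp [hij, Finset.mem_compl]

lemma j_not_mem {i j : Fin 10} : j ∉ (({0, 1, i, j} : Finset (Fin 10)))ᶜ := by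
  simp

lemma zero_not_mem {i j : Fin 10} : (0 : Fin 10) ∉ (({0, 1, i, j} : Finset (Fin 10)))ᶜ := by
  simp

lemma one_not_mem {i j : Fin 10} : (1 : Fin 10) ∉ (({0, 1, i, j} : Finset (Fin 10)))ᶜ := by
  simp

lemma card_compl4 {i j : Fin 10} (hi0 : i ≠ 0) (hi1 : i ≠ 1) (hj0 : j ≠ 0) (hj1 : j ≠ 1)
    (hij : i ≠ j) : (({0, 1, i, j} : Finset (Fin 10)))ᶜ.card = 6 := by
  rw [Finset.card_compl]
  have : ({0, 1, i, j} : Finset (Fin 10)).card = 4 := by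
    rw [Finset.card_insert_of_notMem (by simp [Ne.symm hi0, Ne.symm hj0]),
      Finset.card_insert_of_notMem (by simp [Ne.symm hi1, Ne.symm hj1]),
      Finset.card_insert_of_notMem (by simp [hij]), Finset.card_singleton]
  rw [this]; rfl

lemma sw1_apply (a : Fin 10) : sw1 (bY a) =
    if a = 0 then bY 0
    else if a = 1 then
      (4 : ℤ) • bY 0 + bY 1 - ∑ k ∈ ({0, 1} : Finset (Fin 10))ᶜ, bY k
    else bY 0 - bY a := by
  rw [sw1]; exact basisY.constr_basis ℤ _ a

lemma sw2_apply (a : Fin 10) : sw2 (bY a) =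
    if a = 0 then
      bY 0 + (4 : ℤ) • bY 1 - ∑ k ∈ ({0, 1} : Finset (Fin 10))ᶜ, bY k
    else if a = 1 then bY 1
    else bY 1 - bY a := by
  rw [sw2]; exact basisY.constr_basis ℤ _ a

lemma KY_apply (i j a : Fin 10) : KY i j (bY a) =
    if a = 0 then
      (3 : ℤ) • bY 0 + (4 : ℤ) • bY 1 - (3 : ℤ) • (bY i + bY j)
        - ∑ k ∈ ({0, 1, i, j} : Finset (Fin 10))ᶜ, bY k
    else if a = 1 then
      (4 : ℤ) • bY 0 + (3 : ℤ) • bY 1 - (3 : ℤ) • (bY i + bY j)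
        - ∑ k ∈ ({0, 1, i, j} : Finset (Fin 10))ᶜ, bY k
    else if a = i then
      (3 : ℤ) • bY 0 + (3 : ℤ) • bY 1 - (3 : ℤ) • bY i - (2 : ℤ) • bY j
        - ∑ k ∈ ({0, 1, i, j} : Finset (Fin 10))ᶜ, bY k
    else if a = j then
      (3 : ℤ) • bY 0 + (3 : ℤ) • bY 1 - (2 : ℤ) • bY i - (3 : ℤ) • bY j
        - ∑ k ∈ ({0, 1, i, j} : Finset (Fin 10))ᶜ, bY k
    else bY 0 + bY 1 - bY i - bY j - bY a := by
  rw [KY]; exact basisY.constr_basis ℤ _ a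

lemma KY_S {i j : Fin 10} (hi0 : i ≠ 0) (hi1 : i ≠ 1) (hj0 : j ≠ 0) (hj1 : j ≠ 1)
    (hij : i ≠ j) :
    KY i j (∑ k ∈ ({0, 1, i, j} : Finset (Fin 10))ᶜ, bY k)
      = (6 : ℕ) • (bY 0 + bY 1 - bY i - bY j)
        - ∑ k ∈ ({0, 1, i, j} : Finset (Fin 10))ᶜ, bY k := by
  rw [map_sum]
  have h : ∀ k ∈ ({0, 1, i, j} : Finset (Fin 10))ᶜ,
      KY i j (bY k) = (bY 0 + bY 1 - bY i - bY j) - bY k := by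
    intro k hk
    simp only [Finset.mem_compl, Finset.mem_insert, Finset.mem_singleton, not_or] at hk
    obtain ⟨hk0, hk1, hki, hkj⟩ := hk
    rw [KY_apply]
    simp only [hk0, hk1, hki, hkj, if_false]
  rw [Finset.sum_congr rfl h, Finset.sum_sub_distrib, Finset.sum_const,
    card_compl4 hi0 hi1 hj0 hj1 hij]

lemma formY_deltaY (a : Fin 10) :
    formY deltaY (bY a) = if a = 0 ∨ a = 1 then 2 else 1 := by
  rw [deltaY]
  simp only [map_add, map_sub, map_smul, LinearMap.add_apply, LinearMap.sub_apply,
    LinearMap.smul_apply, smul_eq_mul]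
  rw [formY_sum a _ (by simp) (by simp), formY_bY, formY_bY]
  by_cases h0 : a = 0 <;> by_cases h1 : a = 1 <;>
    simp [h0, h1, Finset.mem_compl]

lemma formY_S {i j : Fin 10} (a : Fin 10) :
    formY (∑ k ∈ ({0, 1, i, j} : Finset (Fin 10))ᶜ, bY k) (bY a)
      = if a ∈ ({0, 1, i, j} : Finset (Fin 10))ᶜ then -1 else 0 :=
  formY_sum a _ zero_not_mem one_not_mem

/-- `K_{i,j} ∘ s₂` equals the Kac translation `T_{H₁-Eᵢ-Eⱼ}` and `K_{i,j} ∘ s₁` equals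
the Kac translation `T_{H₂-Eᵢ-Eⱼ}` on `L_Y`. -/
theorem KY_comp_switch_eq_kacY (i j : Fin 10)
    (hi0 : i ≠ 0) (hi1 : i ≠ 1) (hj0 : j ≠ 0) (hj1 : j ≠ 1) (hij : i ≠ j) :
    KY i j ∘ₗ sw2 = kacY (bY 0 - bY i - bY j) ∧
    KY i j ∘ₗ sw1 = kacY (bY 1 - bY i - bY j) := by
  constructor
  · refine basisY.ext fun a => ?_
    rw [LinearMap.comp_apply]
    have hba : basisY a = bY a := rfl
    rw [hba]
    by_cases ha0 : a = 0
    case pos =>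
      rw [ha0]
      simp only [sw2_apply, kacY, LinearMap.add_apply, LinearMap.id_apply,
        LinearMap.smulRight_apply, LinearMap.sub_apply, LinearMap.smul_apply,
        smul_eq_mul, deltaY,
        compl_split hi0 hi1 hj0 hj1, Finset.sum_insert (i_not_mem hij),
        Finset.sum_insert (j_not_mem (i := i)),
        map_add, map_sub, map_smul, KY_S hi0 hi1 hj0 hj1 hij, KY_apply,
        formY_deltaY, formY_bY, formY_S, Finset.mem_insert, Finset.mem_compl,
        Finset.mem_singleton, hi0, hi1, hj0, hj1, hij,
        Ne.symm hi0, Ne.symm hi1, Ne.symm hj0, Ne.symm hj1, Ne.symm hij,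
        if_true, if_false, eq_self_iff_true, false_and, and_false, true_and,
        and_true, or_false, false_or, or_true, true_or, not_true, not_false_iff,
        ite_true, ite_false, not_or, ne_eq, not_true_eq_false, not_false_eq_true,
        (by decide : (0 : Fin 10) ≠ 1), (by decide : (1 : Fin 10) ≠ 0)]
      module
    by_cases ha1 : a = 1
    case pos =>
      rw [ha1]
      simp only [sw2_apply, kacY, LinearMap.add_apply, LinearMap.id_apply,
        LinearMap.smulRight_apply, LinearMap.sub_apply, LinearMap.smul_apply,
        smul_eq_mul, deltaY,
        compl_split hi0 hi1 hj0 hj1, Finset.sum_insert (i_not_mem hij),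
        Finset.sum_insert (j_not_mem (i := i)),
        map_add, map_sub, map_smul, KY_S hi0 hi1 hj0 hj1 hij, KY_apply,
        formY_deltaY, formY_bY, formY_S, Finset.mem_insert, Finset.mem_compl,
        Finset.mem_singleton, hi0, hi1, hj0, hj1, hij,
        Ne.symm hi0, Ne.symm hi1, Ne.symm hj0, Ne.symm hj1, Ne.symm hij,
        if_true, if_false, eq_self_iff_true, false_and, and_false, true_and,
        and_true, or_false, false_or, or_true, true_or, not_true, not_false_iff,
        ite_true, ite_false, not_or, ne_eq, not_true_eq_false, not_false_eq_true,
        (by decide : (0 : Fin 10) ≠ 1), (by decide : (1 : Fin 10) ≠ 0)]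
      module
    by_cases hai : a = i
    case pos =>
      rw [hai]
      simp only [sw2_apply, kacY, LinearMap.add_apply, LinearMap.id_apply,
        LinearMap.smulRight_apply, LinearMap.sub_apply, LinearMap.smul_apply,
        smul_eq_mul, deltaY,
        compl_split hi0 hi1 hj0 hj1, Finset.sum_insert (i_not_mem hij),
        Finset.sum_insert (j_not_mem (i := i)),
        map_add, map_sub, map_smul, KY_S hi0 hi1 hj0 hj1 hij, KY_apply,
        formY_deltaY, formY_bY, formY_S, Finset.mem_insert, Finset.mem_compl,
        Finset.mem_singleton, hi0, hi1, hj0, hj1, hij,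
        Ne.symm hi0, Ne.symm hi1, Ne.symm hj0, Ne.symm hj1, Ne.symm hij,
        if_true, if_false, eq_self_iff_true, false_and, and_false, true_and,
        and_true, or_false, false_or, or_true, true_or, not_true, not_false_iff,
        ite_true, ite_false, not_or, ne_eq, not_true_eq_false, not_false_eq_true,
        (by decide : (0 : Fin 10) ≠ 1), (by decide : (1 : Fin 10) ≠ 0)]
      module
    by_cases haj : a = j
    case pos =>
      rw [haj]
      simp only [sw2_apply, kacY, LinearMap.add_apply, LinearMap.id_apply,
        LinearMap.smulRight_apply, LinearMap.sub_apply, LinearMap.smul_apply,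
        smul_eq_mul, deltaY,
        compl_split hi0 hi1 hj0 hj1, Finset.sum_insert (i_not_mem hij),
        Finset.sum_insert (j_not_mem (i := i)),
        map_add, map_sub, map_smul, KY_S hi0 hi1 hj0 hj1 hij, KY_apply,
        formY_deltaY, formY_bY, formY_S, Finset.mem_insert, Finset.mem_compl,
        Finset.mem_singleton, hi0, hi1, hj0, hj1, hij,
        Ne.symm hi0, Ne.symm hi1, Ne.symm hj0, Ne.symm hj1, Ne.symm hij,
        if_true, if_false, eq_self_iff_true, false_and, and_false, true_and,
        and_true, or_false, false_or, or_true, true_or, not_true, not_false_iff,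
        ite_true, ite_false, not_or, ne_eq, not_true_eq_false, not_false_eq_true,
        (by decide : (0 : Fin 10) ≠ 1), (by decide : (1 : Fin 10) ≠ 0)]
      module
    case neg =>
      simp only [sw2_apply, kacY, LinearMap.add_apply, LinearMap.id_apply,
        LinearMap.smulRight_apply, LinearMap.sub_apply, LinearMap.smul_apply,
        smul_eq_mul, deltaY,
        compl_split hi0 hi1 hj0 hj1, Finset.sum_insert (i_not_mem hij),
        Finset.sum_insert (j_not_mem (i := i)),
        map_add, map_sub, map_smul, KY_S hi0 hi1 hj0 hj1 hij, KY_apply,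
        formY_deltaY, formY_bY, formY_S, Finset.mem_insert, Finset.mem_compl,
        Finset.mem_singleton, hi0, hi1, hj0, hj1, hij,
        Ne.symm hi0, Ne.symm hi1, Ne.symm hj0, Ne.symm hj1, Ne.symm hij,
        ha0, ha1, hai, haj, Ne.symm ha0, Ne.symm ha1, Ne.symm hai, Ne.symm haj,
        if_true, if_false, eq_self_iff_true, false_and, and_false, true_and,
        and_true, or_false, false_or, or_true, true_or, not_true, not_false_iff,
        ite_true, ite_false, not_or, ne_eq, not_true_eq_false, not_false_eq_true,
        (by decide : (0 : Fin 10) ≠ 1), (by decide : (1 : Fin 10) ≠ 0)]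
      module
  · refine basisY.ext fun a => ?_
    rw [LinearMap.comp_apply]
    have hba : basisY a = bY a := rfl
    rw [hba]
    by_cases ha0 : a = 0
    case pos =>
      rw [ha0]
      simp only [sw1_apply, kacY, LinearMap.add_apply, LinearMap.id_apply,
        LinearMap.smulRight_apply, LinearMap.sub_apply, LinearMap.smul_apply,
        smul_eq_mul, deltaY,
        compl_split hi0 hi1 hj0 hj1, Finset.sum_insert (i_not_mem hij),
        Finset.sum_insert (j_not_mem (i := i)),
        map_add, map_sub, map_smul, KY_S hi0 hi1 hj0 hj1 hij, KY_apply,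
        formY_deltaY, formY_bY, formY_S, Finset.mem_insert, Finset.mem_compl,
        Finset.mem_singleton, hi0, hi1, hj0, hj1, hij,
        Ne.symm hi0, Ne.symm hi1, Ne.symm hj0, Ne.symm hj1, Ne.symm hij,
        if_true, if_false, eq_self_iff_true, false_and, and_false, true_and,
        and_true, or_false, false_or, or_true, true_or, not_true, not_false_iff,
        ite_true, ite_false, not_or, ne_eq, not_true_eq_false, not_false_eq_true,
        (by decide : (0 : Fin 10) ≠ 1), (by decide : (1 : Fin 10) ≠ 0)]
      module
    by_cases ha1 : a = 1
    case pos =>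
      rw [ha1]
      simp only [sw1_apply, kacY, LinearMap.add_apply, LinearMap.id_apply,
        LinearMap.smulRight_apply, LinearMap.sub_apply, LinearMap.smul_apply,
        smul_eq_mul, deltaY,
        compl_split hi0 hi1 hj0 hj1, Finset.sum_insert (i_not_mem hij),
        Finset.sum_insert (j_not_mem (i := i)),
        map_add, map_sub, map_smul, KY_S hi0 hi1 hj0 hj1 hij, KY_apply,
        formY_deltaY, formY_bY, formY_S, Finset.mem_insert, Finset.mem_compl,
        Finset.mem_singleton, hi0, hi1, hj0, hj1, hij,
        Ne.symm hi0, Ne.symm hi1, Ne.symm hj0, Ne.symm hj1, Ne.symm hij,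
        if_true, if_false, eq_self_iff_true, false_and, and_false, true_and,
        and_true, or_false, false_or, or_true, true_or, not_true, not_false_iff,
        ite_true, ite_false, not_or, ne_eq, not_true_eq_false, not_false_eq_true,
        (by decide : (0 : Fin 10) ≠ 1), (by decide : (1 : Fin 10) ≠ 0)]
      module
    by_cases hai : a = i
    case pos =>
      rw [hai]
      simp only [sw1_apply, kacY, LinearMap.add_apply, LinearMap.id_apply,
        LinearMap.smulRight_apply, LinearMap.sub_apply, LinearMap.smul_apply,
        smul_eq_mul, deltaY,
        compl_split hi0 hi1 hj0 hj1, Finset.sum_insert (i_not_mem hij),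
        Finset.sum_insert (j_not_mem (i := i)),
        map_add, map_sub, map_smul, KY_S hi0 hi1 hj0 hj1 hij, KY_apply,
        formY_deltaY, formY_bY, formY_S, Finset.mem_insert, Finset.mem_compl,
        Finset.mem_singleton, hi0, hi1, hj0, hj1, hij,
        Ne.symm hi0, Ne.symm hi1, Ne.symm hj0, Ne.symm hj1, Ne.symm hij,
        if_true, if_false, eq_self_iff_true, false_and, and_false, true_and,
        and_true, or_false, false_or, or_true, true_or, not_true, not_false_iff,
        ite_true, ite_false, not_or, ne_eq, not_true_eq_false, not_false_eq_true,
        (by decide : (0 : Fin 10) ≠ 1), (by decide : (1 : Fin 10) ≠ 0)]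
      module
    by_cases haj : a = j
    case pos =>
      rw [haj]
      simp only [sw1_apply, kacY, LinearMap.add_apply, LinearMap.id_apply,
        LinearMap.smulRight_apply, LinearMap.sub_apply, LinearMap.smul_apply,
        smul_eq_mul, deltaY,
        compl_split hi0 hi1 hj0 hj1, Finset.sum_insert (i_not_mem hij),
        Finset.sum_insert (j_not_mem (i := i)),
        map_add, map_sub, map_smul, KY_S hi0 hi1 hj0 hj1 hij, KY_apply,
        formY_deltaY, formY_bY, formY_S, Finset.mem_insert, Finset.mem_compl,
        Finset.mem_singleton, hi0, hi1, hj0, hj1, hij,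
        Ne.symm hi0, Ne.symm hi1, Ne.symm hj0, Ne.symm hj1, Ne.symm hij,
        if_true, if_false, eq_self_iff_true, false_and, and_false, true_and,
        and_true, or_false, false_or, or_true, true_or, not_true, not_false_iff,
        ite_true, ite_false, not_or, ne_eq, not_true_eq_false, not_false_eq_true,
        (by decide : (0 : Fin 10) ≠ 1), (by decide : (1 : Fin 10) ≠ 0)]
      module
    case neg =>
      simp only [sw1_apply, kacY, LinearMap.add_apply, LinearMap.id_apply,
        LinearMap.smulRight_apply, LinearMap.sub_apply, LinearMap.smul_apply,
        smul_eq_mul, deltaY,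
        compl_split hi0 hi1 hj0 hj1, Finset.sum_insert (i_not_mem hij),
        Finset.sum_insert (j_not_mem (i := i)),
        map_add, map_sub, map_smul, KY_S hi0 hi1 hj0 hj1 hij, KY_apply,
        formY_deltaY, formY_bY, formY_S, Finset.mem_insert, Finset.mem_compl,
        Finset.mem_singleton, hi0, hi1, hj0, hj1, hij,
        Ne.symm hi0, Ne.symm hi1, Ne.symm hj0, Ne.symm hj1, Ne.symm hij,
        ha0, ha1, hai, haj, Ne.symm ha0, Ne.symm ha1, Ne.symm hai, Ne.symm haj,
        if_true, if_false, eq_self_iff_true, false_and, and_false, true_and,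
        and_true, or_false, false_or, or_true, true_or, not_true, not_false_iff,
        ite_true, ite_false, not_or, ne_eq, not_true_eq_false, not_false_eq_true,
        (by decide : (0 : Fin 10) ≠ 1), (by decide : (1 : Fin 10) ≠ 0)]
      module
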